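/- Let d ≥ 4, let P be a simplicial d-polytope with graph G, and let D = E(X, X̄) be a nontrivial minimum edge cut of G for some X ⊆ V(G). For every vertex w ∈ X incident with an edge of D such that 1 ≤ |N_X̄(w)| ≤ d − 2, every vertex of N_X̄(w) is incident with at least d + 1 − |N_X̄(w)| edges of D. Similarly, for every vertex z ∈ V(G)∖X incident with an edge of D such that 1 ≤ |N_X(z)| ≤ d − 2, every vertex of N_X(z) is incident with at least d + 1 − |N_X(z)| edges of D. -/

import Mathlib

noncomputable section

/-- Abbreviation for Euclidean space `ℝ^n`. -/
abbrev Euc (n : ℕ) := EuclideanSpace ℝ (Fin n)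

/-- A polytope is the convex hull of a finite set of points. -/
def IsPolytope {n : ℕ} (P : Set (Euc n)) : Prop :=
  ∃ S : Finset (Euc n), P = convexHull ℝ (S : Set (Euc n))

/-- The dimension of a set of points: the dimension of its affine span. -/
noncomputable def polyDim {n : ℕ} (P : Set (Euc n)) : ℕ :=
  Module.finrank ℝ (affineSpan ℝ P).direction

/-- `F` is an (exposed) face of `P`: `P` itself, or the intersection of `P` with
a hyperplane that has `P` in one of its closed halfspaces. -/
def IsFaceOf {n : ℕ} (P F : Set (Euc n)) : Prop :=
  F = P ∨ ∃ (f : Euc n →ₗ[ℝ] ℝ) (c : ℝ), f ≠ 0 ∧ (∀ x ∈ P, f x ≤ c) ∧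
    F = {x ∈ P | f x = c}

/-- A vertex of `P`: a point whose singleton is a (0-dimensional) face of `P`. -/
def IsVertexOf {n : ℕ} (P : Set (Euc n)) (v : Euc n) : Prop :=
  IsFaceOf P {v}

/-- A facet of `P`: a nonempty face of dimension one less than that of `P`. -/
def IsFacetOf {n : ℕ} (P F : Set (Euc n)) : Prop :=
  IsFaceOf P F ∧ F.Nonempty ∧ polyDim F + 1 = polyDim P

/-- A simplicial `d`-polytope: a polytope of dimension `d` each of whose facets has
exactly `d` vertices. -/
def IsSimplicialPolytope {n : ℕ} (P : Set (Euc n)) (d : ℕ) : Prop :=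
  IsPolytope P ∧ polyDim P = d ∧
    ∀ F, IsFacetOf P F → {v | IsVertexOf F v}.ncard = d

/-- The graph of a polytope `P`: vertices are the vertices of `P`, two of them being
adjacent exactly when the segment joining them is an edge (1-dimensional face) of `P`. -/
def polytopeGraph {n : ℕ} (P : Set (Euc n)) :
    SimpleGraph {v : Euc n // IsVertexOf P v} where
  Adj x y := x ≠ y ∧ IsFaceOf P (segment ℝ (x : Euc n) (y : Euc n))
  symm := ⟨by
    rintro x y ⟨hxy, hseg⟩
    refine ⟨hxy.symm ∘ Eq.symm ∘ Eq.symm, ?_⟩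
    · rwa [segment_symm]⟩
  loopless := ⟨by rintro x ⟨hxx, _⟩; exact hxx rfl⟩

/-- `E(X, X̄)`: the set of edges of `G` with one endpoint in `X` and the other outside `X`. -/
def cutEdges {V : Type*} (G : SimpleGraph V) (X : Set V) : Set (Sym2 V) :=
  {e | ∃ x y, G.Adj x y ∧ x ∈ X ∧ y ∉ X ∧ e = s(x, y)}

/-- An edge cut of `G`: a set of edges of the form `E(X, X̄)` for a nonempty proper
subset `X` of the vertices, whose removal separates two vertices of `G`. -/
def IsEdgeCut {V : Type*} (G : SimpleGraph V) (D : Set (Sym2 V)) : Prop :=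
  ∃ X : Set V, X.Nonempty ∧ Xᶜ.Nonempty ∧ D = cutEdges G X ∧
    ∃ x y : V, ¬ (G.deleteEdges D).Reachable x y

/-- A minimum edge cut: an edge cut of least cardinality. -/
def IsMinEdgeCut {V : Type*} (G : SimpleGraph V) (D : Set (Sym2 V)) : Prop :=
  IsEdgeCut G D ∧ ∀ D' : Set (Sym2 V), IsEdgeCut G D' → D.ncard ≤ D'.ncard

/-- A trivial edge cut: the set of all edges incident with a single vertex. -/
def IsTrivialEdgeCut {V : Type*} (G : SimpleGraph V) (D : Set (Sym2 V)) : Prop :=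
  ∃ v : V, D = G.incidenceSet v

/-- `G` is `r`-edge-connected: no two vertices are separated by removing fewer than
`r` edges. -/
def EdgeConnectedGE {V : Type*} (G : SimpleGraph V) (r : ℕ) : Prop :=
  ∀ D : Finset (Sym2 V), D.card < r →
    ∀ x y : V, (G.deleteEdges (D : Set (Sym2 V))).Reachable x y

/-- The set of vertices incident with an edge of `D`. -/
def cutVerts {V : Type*} (D : Set (Sym2 V)) : Set V :=
  {v | ∃ e ∈ D, v ∈ e}

/-! An edge `wv` of a simplicial `d`-polytope (`d ≥ 3`) lies in two distinct facets, which are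
`(d - 1)`-simplices; their union has at least `d + 1` vertices, and each of them other than `w`
and `v` is adjacent to both, so `w` and `v` have at least `d - 1` common neighbours. If `w ∈ X`
and `v ∈ N_X̄(w)`, the common neighbours in `X̄`, together with `v`, lie in `N_X̄(w)`, while those
in `X`, together with `w`, are the far ends of cut edges at `v`. Hence
`(d - 1) + 2 ≤ |{e ∈ D | v ∈ e}| + |N_X̄(w)|`.

The facts about faces (a face of a face is a face, every proper face lies in a facet, a face of
codimension at least two lies in two facets) are proved by tilting supporting functionals about
the face until they touch a further vertex. -/

section ConvexHull

variable {E : Type*} [AddCommGroup E] [Module ℝ E] {f : E →ₗ[ℝ] ℝ} {c : ℝ}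

theorem LinearMap.apply_le_of_mem_convexHull {A : Set E} (hA : ∀ a ∈ A, f a ≤ c) {x : E}
    (hx : x ∈ convexHull ℝ A) : f x ≤ c :=
  convexHull_min hA (convex_halfSpace_le f.isLinear c) hx

theorem LinearMap.apply_eq_of_mem_convexHull {A : Set E} (hA : ∀ a ∈ A, f a = c) {x : E}
    (hx : x ∈ convexHull ℝ A) : f x = c :=
  convexHull_min hA (convex_hyperplane f.isLinear c) hx

theorem sep_convexHull_eq_convexHull_filter {S : Finset E} (hS : ∀ s ∈ S, f s ≤ c) :
    {x ∈ convexHull ℝ (S : Set E) | f x = c} =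
      convexHull ℝ (S.filter (fun s => f s = c) : Set E) := by
  refine Set.Subset.antisymm ?_ fun x hx =>
    ⟨convexHull_mono (Finset.coe_subset.mpr (Finset.filter_subset _ _)) hx,
      f.apply_eq_of_mem_convexHull (fun s hs => (Finset.mem_filter.mp hs).2) hx⟩
  rintro x ⟨hx, hfx⟩
  obtain ⟨w, hw0, hw1, rfl⟩ := Finset.mem_convexHull'.mp hx
  have hsum : ∑ s ∈ S, w s * (c - f s) = 0 := by
    simp only [map_sum, map_smul, smul_eq_mul] at hfx
    simp only [mul_sub, Finset.sum_sub_distrib, ← Finset.sum_mul, hw1, one_mul, hfx, sub_self]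
  have hw : ∀ s ∈ S, f s ≠ c → w s = 0 := fun s hs hne =>
    (mul_eq_zero.mp ((Finset.sum_eq_zero_iff_of_nonneg fun t ht =>
      mul_nonneg (hw0 t ht) (sub_nonneg.mpr (hS t ht))).mp hsum s hs)).resolve_right
      (sub_ne_zero.mpr hne.symm)
  refine Finset.mem_convexHull'.mpr ⟨w, fun s hs => hw0 s (Finset.mem_filter.mp hs).1, ?_, ?_⟩
  · rw [Finset.sum_filter_of_ne fun s hs h => not_not.mp fun hne => h (hw s hs hne), hw1]
  · exact Finset.sum_filter_of_ne fun s hs h => not_not.mp fun hne => h (by simp [hw s hs hne])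

end ConvexHull

section Tilt

variable {α : Type*} {S : Finset α} {f g : α → ℝ} {c γ : ℝ}

/-- Rotating the supporting hyperplane `f = c` of `S` about `{f = c, g = γ}` as far as it goes,
until it meets a point with `g > γ`. -/
theorem exists_tilt_touching (hf : ∀ s ∈ S, f s ≤ c) (hg : ∀ s ∈ S, f s = c → g s ≤ γ)
    (hpos : ∃ s ∈ S, γ < g s) :
    ∃ t > 0, (∀ s ∈ S, f s + t * g s ≤ c + t * γ) ∧
      ∃ m ∈ S, γ < g m ∧ f m + t * g m = c + t * γ := by
  have hlt : ∀ s ∈ S, γ < g s → f s < c := fun s hs hgs =>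
    (hf s hs).lt_of_ne fun h => (hg s hs h).not_gt hgs
  obtain ⟨m, hm, hmin⟩ := (S.filter (fun s => γ < g s)).exists_min_image
    (fun s => (c - f s) / (g s - γ))
    (hpos.imp fun s ⟨hs, h⟩ => Finset.mem_filter.mpr ⟨hs, h⟩)
  obtain ⟨hmS, hgm⟩ := Finset.mem_filter.mp hm
  have hfm := hlt m hmS hgm
  have hgm' : g m - γ ≠ 0 := by linarith
  refine ⟨(c - f m) / (g m - γ), div_pos (by linarith) (by linarith), fun s hs => ?_,
    m, hmS, hgm, by field_simp; ring⟩
  by_cases hgs : γ < g s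
  · have := hmin s (Finset.mem_filter.mpr ⟨hs, hgs⟩)
    rw [le_div_iff₀ (by linarith)] at this
    linarith
  · nlinarith [hf s hs, div_pos (by linarith : 0 < c - f m) (by linarith : 0 < g m - γ)]

theorem exists_tilt_strict (hf : ∀ s ∈ S, f s ≤ c) (hg : ∀ s ∈ S, f s = c → g s ≤ γ) :
    ∃ t > 0, ∀ s ∈ S, f s + t * g s ≤ c + t * γ ∧ (f s < c → f s + t * g s < c + t * γ) := by
  by_cases hpos : ∃ s ∈ S, γ < g s
  · obtain ⟨t, ht, hle, -⟩ := exists_tilt_touching hf hg hpos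
    -- halving the maximal tilt keeps the points with `f < c` strictly below
    refine ⟨t / 2, by positivity, fun s hs => ⟨?_, fun hfs => ?_⟩⟩ <;>
      linarith [hle s hs, hf s hs]
  · push Not at hpos
    exact ⟨1, one_pos, fun s hs => ⟨by linarith [hf s hs, hpos s hs],
      fun hfs => by linarith [hpos s hs]⟩⟩

end Tilt

section Faces

variable {n : ℕ} {P F G : Set (Euc n)}

theorem IsFaceOf.subset (h : IsFaceOf P F) : F ⊆ P := by
  rcases h with rfl | ⟨f, c, -, -, rfl⟩
  exacts [subset_rfl, Set.sep_subset _ _]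

theorem isFaceOf_sep {f : Euc n →ₗ[ℝ] ℝ} {c : ℝ} (hf : ∀ x ∈ P, f x ≤ c)
    (hne : {x ∈ P | f x = c}.Nonempty) : IsFaceOf P {x ∈ P | f x = c} := by
  by_cases h0 : f = 0
  · obtain ⟨x, -, hx⟩ := hne
    subst h0
    exact Or.inl (Set.sep_eq_self_iff_mem_true.mpr fun y _ => hx)
  · exact Or.inr ⟨f, c, h0, hf, rfl⟩

theorem IsFaceOf.exists_finset_subset {S : Finset (Euc n)}
    (hS : P = convexHull ℝ (S : Set (Euc n))) (hF : IsFaceOf P F) :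
    ∃ T ⊆ S, F = convexHull ℝ (T : Set (Euc n)) := by
  rcases hF with rfl | ⟨f, c, -, hf, rfl⟩
  · exact ⟨S, subset_rfl, hS⟩
  · subst hS
    exact ⟨_, Finset.filter_subset _ _, sep_convexHull_eq_convexHull_filter fun s hs =>
      hf s (subset_convexHull ℝ _ hs)⟩

theorem IsFaceOf.isPolytope (hP : IsPolytope P) (hF : IsFaceOf P F) : IsPolytope F := by
  obtain ⟨S, hS⟩ := hP
  obtain ⟨T, -, hT⟩ := hF.exists_finset_subset hS
  exact ⟨T, hT⟩

theorem IsFaceOf.trans (hP : IsPolytope P) (hF : IsFaceOf P F) (hG : IsFaceOf F G)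
    (hne : G.Nonempty) : IsFaceOf P G := by
  obtain ⟨S, rfl⟩ := hP
  rcases hG with rfl | ⟨g, c', hg0, hg, rfl⟩
  · exact hF
  rcases hF with rfl | ⟨f, c, -, hf, rfl⟩
  · exact Or.inr ⟨g, c', hg0, hg, rfl⟩
  have hmem : ∀ s ∈ S, s ∈ convexHull ℝ (S : Set (Euc n)) := fun s hs =>
    subset_convexHull ℝ _ hs
  obtain ⟨t, ht, htilt⟩ := exists_tilt_strict (S := S) (f := f) (g := g) (c := c) (γ := c')
    (fun s hs => hf s (hmem s hs)) (fun s hs hfs => hg s ⟨hmem s hs, hfs⟩)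
  have hS : ∀ s ∈ S, (f + t • g) s ≤ c + t * c' := fun s hs => by simpa using (htilt s hs).1
  have hfilter : ∀ s ∈ S.filter (fun s => (f + t • g) s = c + t * c'), f s = c ∧ g s = c' := by
    intro s hs
    obtain ⟨hsS, hs⟩ := Finset.mem_filter.mp hs
    simp only [LinearMap.add_apply, LinearMap.smul_apply, smul_eq_mul] at hs
    have hfs : f s = c := (hf s (hmem s hsS)).eq_or_lt.resolve_right fun hlt =>
      ((htilt s hsS).2 hlt).ne hs
    exact ⟨hfs, by nlinarith⟩
  have hGeq : {x ∈ {x ∈ convexHull ℝ (S : Set (Euc n)) | f x = c} | g x = c'} =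
      {x ∈ convexHull ℝ (S : Set (Euc n)) | (f + t • g) x = c + t * c'} := by
    refine Set.Subset.antisymm (fun x ⟨⟨hx, hfx⟩, hgx⟩ => ⟨hx, by simp [hfx, hgx]⟩) ?_
    intro x hx
    rw [sep_convexHull_eq_convexHull_filter hS] at hx
    exact ⟨⟨convexHull_mono (Finset.coe_subset.mpr (Finset.filter_subset _ _)) hx,
      f.apply_eq_of_mem_convexHull (fun s hs => (hfilter s hs).1) hx⟩,
      g.apply_eq_of_mem_convexHull (fun s hs => (hfilter s hs).2) hx⟩
  rw [hGeq] at hne ⊢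
  exact isFaceOf_sep (fun x hx => (f + t • g).apply_le_of_mem_convexHull hS hx) hne

end Faces

section Vertices

variable {n : ℕ} {P F : Set (Euc n)} {v : Euc n}

theorem IsVertexOf.mem (hv : IsVertexOf P v) : v ∈ P :=
  hv.subset rfl

theorem IsVertexOf.mem_finset {S : Finset (Euc n)} (hS : P = convexHull ℝ (S : Set (Euc n)))
    (hv : IsVertexOf P v) : v ∈ S := by
  obtain ⟨T, hTS, hT⟩ := IsFaceOf.exists_finset_subset hS hv
  obtain ⟨t, ht⟩ : T.Nonempty := by
    rw [← Finset.coe_nonempty, ← convexHull_nonempty_iff (𝕜 := ℝ), ← hT]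
    exact Set.singleton_nonempty v
  have htv : t = v := by simpa [← hT] using subset_convexHull ℝ (T : Set (Euc n)) ht
  exact hTS (htv ▸ ht)

theorem IsPolytope.finite_vertices (hP : IsPolytope P) : {v | IsVertexOf P v}.Finite := by
  obtain ⟨S, hS⟩ := hP
  exact S.finite_toSet.subset fun v hv => IsVertexOf.mem_finset hS hv

theorem IsVertexOf.of_mem_face (hv : IsVertexOf P v) (hF : IsFaceOf P F) (hvF : v ∈ F) :
    IsVertexOf F v := by
  rcases hv with hv | ⟨f, c, hf0, hf, hv⟩
  · exact Or.inl (Set.Subset.antisymm (Set.singleton_subset_iff.mpr hvF) (hv ▸ hF.subset))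
  · refine Or.inr ⟨f, c, hf0, fun x hx => hf x (hF.subset hx), ?_⟩
    rw [Set.ext_iff] at hv ⊢
    exact fun x => ⟨fun hx => ⟨(Set.mem_singleton_iff.mp hx) ▸ hvF, ((hv x).mp hx).2⟩,
      fun hx => (hv x).mpr ⟨hF.subset hx.1, hx.2⟩⟩

theorem isVertexOf_of_mem_extremePoints {S : Finset (Euc n)} {x : Euc n}
    (hx : x ∈ (convexHull ℝ (S : Set (Euc n))).extremePoints ℝ) :
    IsVertexOf (convexHull ℝ (S : Set (Euc n))) x := by
  have hxS : x ∈ S := extremePoints_convexHull_subset hx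
  have hxT : x ∉ convexHull ℝ ((S.erase x : Finset (Euc n)) : Set (Euc n)) := by
    rw [(convex_convexHull ℝ _).mem_extremePoints_iff_mem_sdiff_convexHull_sdiff] at hx
    refine fun h => hx.2 (convexHull_mono ?_ h)
    rw [Finset.coe_erase]
    exact Set.sdiff_subset_sdiff_left (subset_convexHull ℝ _)
  obtain ⟨l, u, hlu, hux⟩ := geometric_hahn_banach_closed_point (convex_convexHull ℝ _)
    ((S.erase x).finite_toSet.isClosed_convexHull (𝕜 := ℝ)) hxT
  have hl : ∀ s ∈ S, s ≠ x → l s < l x := fun s hs hsx =>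
    (hlu s (subset_convexHull ℝ _ (Finset.mem_erase.mpr ⟨hsx, hs⟩))).trans hux
  have hS : ∀ s ∈ S, l.toLinearMap s ≤ l x := fun s hs => by
    by_cases hsx : s = x
    exacts [hsx ▸ le_rfl, (hl s hs hsx).le]
  have hfilter : S.filter (fun s => l.toLinearMap s = l x) = {x} := by
    ext s
    simp only [Finset.mem_filter, Finset.mem_singleton, ContinuousLinearMap.coe_coe]
    exact ⟨fun ⟨hs, hsx⟩ => not_not.mp fun h => (hl s hs h).ne hsx, fun h => ⟨h ▸ hxS, h ▸ rfl⟩⟩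
  have hface := sep_convexHull_eq_convexHull_filter hS
  rw [hfilter, Finset.coe_singleton, convexHull_singleton] at hface
  unfold IsVertexOf
  rw [← hface]
  exact isFaceOf_sep (fun y hy => l.toLinearMap.apply_le_of_mem_convexHull hS hy)
    (hface ▸ Set.singleton_nonempty x)

theorem IsPolytope.convexHull_vertices (hP : IsPolytope P) :
    convexHull ℝ {v | IsVertexOf P v} = P := by
  obtain ⟨S, rfl⟩ := hP
  refine (convexHull_min (fun v hv => IsVertexOf.mem hv) (convex_convexHull ℝ _)).antisymm ?_
  set K := convexHull ℝ (S : Set (Euc n))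
  have hext : (K.extremePoints ℝ).Finite := S.finite_toSet.subset extremePoints_convexHull_subset
  calc K = closure (convexHull ℝ (K.extremePoints ℝ)) :=
        (closure_convexHull_extremePoints (S.finite_toSet.isCompact_convexHull (𝕜 := ℝ))
          (convex_convexHull ℝ _)).symm
    _ = convexHull ℝ (K.extremePoints ℝ) := (hext.isClosed_convexHull (𝕜 := ℝ)).closure_eq
    _ ⊆ convexHull ℝ {v | IsVertexOf K v} :=
        convexHull_mono fun x hx => isVertexOf_of_mem_extremePoints hx

end Vertices

theorem Submodule.finrank_le_finrank_inf_ker_add_one {K V : Type*} [Field K] [AddCommGroup V]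
    [Module K V] [FiniteDimensional K V] (W : Submodule K V) (f : V →ₗ[K] K) :
    Module.finrank K W ≤ Module.finrank K ↥(W ⊓ LinearMap.ker f) + 1 := by
  have hsup := Submodule.finrank_sup_add_finrank_inf_eq W (LinearMap.ker f)
  have hker := LinearMap.finrank_range_add_finrank_ker f
  have hrange : Module.finrank K (LinearMap.range f) ≤ 1 :=
    (Submodule.finrank_le _).trans (Module.finrank_self K).le
  have := Submodule.finrank_le (W ⊔ LinearMap.ker f)
  omega

theorem vectorSpan_le_ker_of_forall_eq {E : Type*} [AddCommGroup E] [Module ℝ E] {A : Set E}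
    {f : E →ₗ[ℝ] ℝ} {c : ℝ} (hA : ∀ a ∈ A, f a = c) : vectorSpan ℝ A ≤ LinearMap.ker f := by
  rw [vectorSpan_def, Submodule.span_le]
  rintro _ ⟨x, hx, y, hy, rfl⟩
  simp [hA x hx, hA y hy]

theorem vectorSpan_convexHull {E : Type*} [AddCommGroup E] [Module ℝ E] (A : Set E) :
    vectorSpan ℝ (convexHull ℝ A) = vectorSpan ℝ A := by
  rw [← direction_affineSpan, affineSpan_convexHull, direction_affineSpan]

theorem LinearIndependent.exists_linearMap_apply_eq {ι K V : Type*} [Field K]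
    [AddCommGroup V] [Module K V] {b : ι → V} (hb : LinearIndependent K b) (y : ι → K) :
    ∃ g : V →ₗ[K] K, ∀ i, g (b i) = y i := by
  obtain ⟨g, hg⟩ := LinearMap.exists_extend ((Module.Basis.span hb).constr K y)
  refine ⟨g, fun i => ?_⟩
  have := congr($hg (Module.Basis.span hb i))
  rwa [LinearMap.comp_apply, Submodule.subtype_apply, Module.Basis.coe_span_apply,
    Module.Basis.constr_basis] at this

section Dimension

variable {n : ℕ} {A B P F G : Set (Euc n)}

theorem polyDim_eq_finrank_vectorSpan (A : Set (Euc n)) :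
    polyDim A = Module.finrank ℝ (vectorSpan ℝ A) := by
  rw [polyDim, direction_affineSpan]

theorem polyDim_mono (h : A ⊆ B) : polyDim A ≤ polyDim B := by
  simp only [polyDim_eq_finrank_vectorSpan]
  exact Submodule.finrank_mono (vectorSpan_mono ℝ h)

theorem polyDim_segment_le (p q : Euc n) : polyDim (segment ℝ p q) ≤ 1 := by
  rw [polyDim, ← convexHull_pair, affineSpan_convexHull, direction_affineSpan, vectorSpan_pair]
  exact (finrank_span_le_card _).trans (by simp)

theorem polyDim_lt_of_apply_ne {f : Euc n →ₗ[ℝ] ℝ} {c : ℝ} {a b : Euc n} (hAB : A ⊆ B)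
    (hA : ∀ x ∈ A, f x = c) (ha : a ∈ A) (hb : b ∈ B) (hfb : f b ≠ c) :
    polyDim A < polyDim B := by
  simp only [polyDim_eq_finrank_vectorSpan]
  refine Submodule.finrank_lt_finrank_of_lt (lt_of_le_of_ne (vectorSpan_mono ℝ hAB) fun h => ?_)
  have hba : b -ᵥ a ∈ vectorSpan ℝ A := h ▸ vsub_mem_vectorSpan ℝ hb (hAB ha)
  have := vectorSpan_le_ker_of_forall_eq hA hba
  simp [hA a ha] at this
  exact hfb (sub_eq_zero.mp this)

theorem IsFaceOf.polyDim_lt (hF : IsFaceOf P F) (hne : F.Nonempty) (hFP : F ≠ P) :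
    polyDim F < polyDim P := by
  rcases hF with rfl | ⟨f, c, -, -, rfl⟩
  · exact absurd rfl hFP
  obtain ⟨a, ha⟩ := hne
  obtain ⟨b, hb, hfb⟩ : ∃ b ∈ P, f b ≠ c := by
    by_contra! h
    exact hFP (Set.sep_eq_self_iff_mem_true.mpr h)
  exact polyDim_lt_of_apply_ne (Set.sep_subset _ _) (fun x hx => hx.2) ha hb hfb

end Dimension

section Facets

variable {n : ℕ} {P G e : Set (Euc n)}

/-- Tilt `f` by a functional `g` that is constant on the face but not along some direction `u`
of `P` in `ker f`; such a `u` exists because the codimension is at least two. -/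
theorem exists_isFaceOf_superset_polyDim_lt {S : Finset (Euc n)}
    (hS : P = convexHull ℝ (S : Set (Euc n))) {f : Euc n →ₗ[ℝ] ℝ} {c : ℝ}
    (hf : ∀ x ∈ P, f x ≤ c) (hne : {x ∈ P | f x = c}.Nonempty)
    (hdim : polyDim {x ∈ P | f x = c} + 2 ≤ polyDim P) :
    ∃ G, IsFaceOf P G ∧ {x ∈ P | f x = c} ⊆ G ∧ G ≠ P ∧ polyDim {x ∈ P | f x = c} < polyDim G := by
  set F := {x ∈ P | f x = c}
  obtain ⟨a, ha⟩ := hne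
  have hmem : ∀ s ∈ S, s ∈ P := fun s hs => hS ▸ subset_convexHull ℝ _ hs
  obtain ⟨u, ⟨huP, hfu⟩, huF⟩ : ∃ u ∈ vectorSpan ℝ P ⊓ LinearMap.ker f, u ∉ vectorSpan ℝ F := by
    refine SetLike.not_le_iff_exists.mp fun hle => ?_
    have := Submodule.finrank_mono hle
    have := (vectorSpan ℝ P).finrank_le_finrank_inf_ker_add_one f
    simp only [polyDim_eq_finrank_vectorSpan] at hdim
    omega
  obtain ⟨g, hgF, hgu⟩ := LinearMap.exists_extend_of_notMem (0 : vectorSpan ℝ F →ₗ[ℝ] ℝ) huF 1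
  replace hgF : ∀ x ∈ F, g x = g a := fun x hx => by
    simpa [sub_eq_zero] using congr($hgF ⟨x -ᵥ a, vsub_mem_vectorSpan ℝ hx ha⟩)
  replace hgu : g u ≠ 0 := by simp [hgu]
  wlog hpos : ∃ s ∈ S, g a < g s generalizing g
  · refine this (-g) (fun x hx => by simp [hgF x hx]) (by simpa using hgu) ?_
    by_contra! hneg
    have hconst : ∀ s ∈ S, g s = g a := fun s hs =>
      le_antisymm (not_lt.mp fun h => hpos ⟨s, hs, h⟩) (by simpa using hneg s hs)
    apply hgu
    have := vectorSpan_le_ker_of_forall_eq (A := P) fun x hx =>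
      g.apply_eq_of_mem_convexHull hconst (hS ▸ hx)
    exact this huP
  obtain ⟨t, ht, hle, m, hmS, hgm, hm⟩ := exists_tilt_touching (S := S) (f := f) (g := g)
    (fun s hs => hf s (hmem s hs)) (fun s hs hfs => (hgF s ⟨hmem s hs, hfs⟩).le) hpos
  have hFG : F ⊆ {x ∈ P | (f + t • g) x = c + t * g a} := fun x hx =>
    ⟨hx.1, by simp [hx.2, hgF x hx]⟩
  refine ⟨_, isFaceOf_sep (fun x hx => (f + t • g).apply_le_of_mem_convexHull
    (fun s hs => by simpa using hle s hs) (hS ▸ hx)) ⟨a, hFG ha⟩, hFG, fun hGP => ?_,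
    polyDim_lt_of_apply_ne hFG hgF ha ⟨hmem m hmS, by simpa using hm⟩ hgm.ne'⟩
  have := vectorSpan_le_ker_of_forall_eq (A := P)
    (fun x hx => (hGP.symm ▸ hx : x ∈ {x ∈ P | _}).2) huP
  simp only [LinearMap.mem_ker, LinearMap.add_apply, LinearMap.smul_apply, smul_eq_mul,
    LinearMap.mem_ker.mp hfu, zero_add] at this
  exact mul_ne_zero ht.ne' hgu this

theorem IsFaceOf.exists_facet_superset (hP : IsPolytope P) (hG : IsFaceOf P G)
    (hne : G.Nonempty) (hGP : G ≠ P) : ∃ F, IsFacetOf P F ∧ G ⊆ F := by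
  induction h : polyDim P - polyDim G using Nat.strong_induction_on generalizing G with
  | _ k ih =>
    have hlt := hG.polyDim_lt hne hGP
    by_cases hcodim : polyDim G + 1 = polyDim P
    · exact ⟨G, ⟨hG, hne, hcodim⟩, subset_rfl⟩
    rcases hG with rfl | ⟨f, c, -, hf, rfl⟩
    · exact absurd rfl hGP
    obtain ⟨S, hS⟩ := hP
    obtain ⟨G', hG', hGG', hG'P, hdim⟩ :=
      exists_isFaceOf_superset_polyDim_lt hS hf hne (by omega)
    obtain ⟨F, hF, hG'F⟩ := ih _ (by omega) hG' (hne.mono hGG') hG'P rfl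
    exact ⟨F, hF, hGG'.trans hG'F⟩

/-- The second facet contains the face exposed by tilting the functional of `e` away from a
first facet `F₁ ⊇ e` until it touches a vertex outside `F₁`. -/
theorem IsFaceOf.exists_two_facets (hP : IsPolytope P) (he : IsFaceOf P e) (hne : e.Nonempty)
    (hdim : polyDim e + 2 ≤ polyDim P) :
    ∃ F₁ F₂, IsFacetOf P F₁ ∧ IsFacetOf P F₂ ∧ e ⊆ F₁ ∧ e ⊆ F₂ ∧ F₁ ≠ F₂ := by
  have heP : e ≠ P := by rintro rfl; omega
  obtain ⟨F₁, hF₁, heF₁⟩ := he.exists_facet_superset hP hne heP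
  obtain ⟨S, rfl⟩ := hP
  have hmem : ∀ s ∈ S, s ∈ convexHull ℝ (S : Set (Euc n)) := fun s hs =>
    subset_convexHull ℝ _ hs
  rcases hF₁.1 with hF₁P | ⟨f₁, c₁, -, hf₁, rfl⟩
  · have := hF₁.2.2; rw [hF₁P] at this; omega
  rcases he with rfl | ⟨fe, ce, -, hfe, rfl⟩
  · exact absurd rfl heP
  obtain ⟨s₀, hs₀, hfs₀⟩ : ∃ s ∈ S, -c₁ < -f₁ s := by
    by_contra! h
    have := hF₁.2.2
    rw [Set.sep_eq_self_iff_mem_true.mpr fun x hx => f₁.apply_eq_of_mem_convexHull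
      (fun s hs => le_antisymm (hf₁ s (hmem s hs)) (by simpa using h s hs)) hx] at this
    omega
  obtain ⟨t, -, hle, m, hmS, hm₁, hm⟩ := exists_tilt_touching (S := S) (f := fe) (g := -f₁)
    (fun s hs => hfe s (hmem s hs))
    (fun s hs hfs => by simp [(heF₁ ⟨hmem s hs, hfs⟩).2]) ⟨s₀, hs₀, hfs₀⟩
  set G₂ := {x ∈ convexHull ℝ (S : Set (Euc n)) | (fe + t • -f₁) x = ce + t * -c₁}
  have heG₂ : {x ∈ convexHull ℝ (S : Set (Euc n)) | fe x = ce} ⊆ G₂ := fun x hx =>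
    ⟨hx.1, by simp [hx.2, (heF₁ hx).2]⟩
  have hG₂P : G₂ ≠ convexHull ℝ (S : Set (Euc n)) := fun hG₂ => by
    have hsub : {x ∈ convexHull ℝ (S : Set (Euc n)) | f₁ x = c₁} ⊆
        {x ∈ convexHull ℝ (S : Set (Euc n)) | fe x = ce} := fun x hx => by
      have := (hG₂.symm ▸ hx.1 : x ∈ G₂).2
      simp only [LinearMap.add_apply, LinearMap.smul_apply, LinearMap.neg_apply, smul_eq_mul,
        hx.2] at this
      exact ⟨hx.1, by linarith⟩
    have := polyDim_mono hsub
    have := hF₁.2.2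
    omega
  obtain ⟨F₂, hF₂, hG₂F₂⟩ := (isFaceOf_sep (fun x hx => (fe + t • -f₁).apply_le_of_mem_convexHull
    (fun s hs => by simpa using hle s hs) hx) (hne.mono heG₂)).exists_facet_superset
    ⟨S, rfl⟩ (hne.mono heG₂) hG₂P
  refine ⟨_, F₂, hF₁, hF₂, heF₁, heG₂.trans hG₂F₂, fun h => ?_⟩
  have hmF₁ := h ▸ hG₂F₂ (⟨hmem m hmS, by simpa using hm⟩ : m ∈ G₂)
  exact hm₁.ne (by simp [hmF₁.2])

end Facets

section Simplex

variable {n : ℕ}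

theorem isFaceOf_convexHull_of_affineIndependent {T A : Finset (Euc n)}
    (hT : AffineIndependent ℝ ((↑) : T → Euc n)) (hAT : A ⊆ T) (hA : A.Nonempty) :
    IsFaceOf (convexHull ℝ (T : Set (Euc n))) (convexHull ℝ (A : Set (Euc n))) := by
  classical
  obtain ⟨p, hp⟩ := hA
  obtain ⟨g, hg⟩ := ((affineIndependent_iff_linearIndependent_vsub ℝ _ ⟨p, hAT hp⟩).mp
    hT).exists_linearMap_apply_eq fun u => if (u : Euc n) ∈ A then 0 else -1
  have hval : ∀ u ∈ T, g u = g p + if u ∈ A then 0 else -1 := by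
    intro u hu
    by_cases hup : u = p
    · simp [hup, hp]
    · have := hg ⟨⟨u, hu⟩, fun h => hup (congrArg Subtype.val h)⟩
      simp only [vsub_eq_sub, map_sub] at this
      linarith
  have hle : ∀ u ∈ T, g u ≤ g p := fun u hu => by
    rw [hval u hu]; split_ifs <;> norm_num
  have hfilter : T.filter (fun u => g u = g p) = A := by
    ext u
    simp only [Finset.mem_filter]
    constructor
    · rintro ⟨hu, hgu⟩
      rw [hval u hu] at hgu
      by_contra huA
      simp [huA] at hgu
    · exact fun huA => ⟨hAT huA, by simp [hval u (hAT huA), huA]⟩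
  rw [← hfilter, ← sep_convexHull_eq_convexHull_filter hle]
  refine isFaceOf_sep (fun x hx => g.apply_le_of_mem_convexHull hle hx) ⟨p, ?_⟩
  rw [sep_convexHull_eq_convexHull_filter hle, hfilter]
  exact subset_convexHull ℝ _ hp

theorem IsPolytope.isFaceOf_segment_of_ncard_vertices {F : Set (Euc n)} (hF : IsPolytope F)
    (hcard : {v | IsVertexOf F v}.ncard = polyDim F + 1) {p q : Euc n}
    (hp : IsVertexOf F p) (hq : IsVertexOf F q) : IsFaceOf F (segment ℝ p q) := by
  classical
  set T := hF.finite_vertices.toFinset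
  have hFT : convexHull ℝ (T : Set (Euc n)) = F := by
    rw [Set.Finite.coe_toFinset]; exact hF.convexHull_vertices
  have hT : AffineIndependent ℝ ((↑) : T → Euc n) := by
    rw [affineIndependent_iff_finrank_vectorSpan_eq ℝ _ (n := polyDim F)]
    · rw [polyDim_eq_finrank_vectorSpan, ← hFT, vectorSpan_convexHull]
      exact congrArg (fun A => Module.finrank ℝ (vectorSpan ℝ A)) Subtype.range_coe_subtype
    · rw [Fintype.card_coe, ← hcard, Set.ncard_eq_toFinset_card _ hF.finite_vertices]
  have := isFaceOf_convexHull_of_affineIndependent hT (A := {p, q})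
    (by simpa [T, Set.insert_subset_iff] using ⟨hp, hq⟩) (Finset.insert_nonempty _ _)
  rwa [hFT, Finset.coe_pair, convexHull_pair] at this

end Simplex

section PolytopeGraph

variable {n d : ℕ} {P F : Set (Euc n)}

theorem IsFaceOf.image_val_vertices (hP : IsPolytope P) (hF : IsFaceOf P F) :
    Subtype.val '' {u : {v : Euc n // IsVertexOf P v} | IsVertexOf F u} =
      {x | IsVertexOf F x} := by
  ext x
  exact ⟨fun ⟨u, hu, hux⟩ => hux ▸ hu,
    fun hx => ⟨⟨x, IsFaceOf.trans hP hF hx (Set.singleton_nonempty x)⟩, hx, rfl⟩⟩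

theorem IsFacetOf.adj_of_isVertexOf (hP : IsSimplicialPolytope P d) (hF : IsFacetOf P F)
    {u w : {v : Euc n // IsVertexOf P v}} (hu : IsVertexOf F u) (hw : IsVertexOf F w)
    (huw : u ≠ w) : (polytopeGraph P).Adj u w := by
  have hcard : {v | IsVertexOf F v}.ncard = polyDim F + 1 := by
    rw [hP.2.2 F hF, hF.2.2, hP.2.1]
  exact ⟨huw, IsFaceOf.trans hP.1 hF.1
    ((hF.1.isPolytope hP.1).isFaceOf_segment_of_ncard_vertices hcard hu hw)
    ⟨u, left_mem_segment ℝ _ _⟩⟩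

theorem IsSimplicialPolytope.le_ncard_commonNeighbors (hd : 3 ≤ d)
    (hP : IsSimplicialPolytope P d) {w v : {v : Euc n // IsVertexOf P v}}
    (hwv : (polytopeGraph P).Adj w v) :
    d - 1 ≤ ((polytopeGraph P).commonNeighbors w v).ncard := by
  have : Finite {v : Euc n // IsVertexOf P v} := hP.1.finite_vertices.to_subtype
  obtain ⟨F₁, F₂, hF₁, hF₂, hwvF₁, hwvF₂, hF₁₂⟩ := IsFaceOf.exists_two_facets hP.1 hwv.2
    ⟨w, left_mem_segment ℝ _ _⟩
    (by have := polyDim_segment_le (w : Euc n) v; have := hP.2.1; omega)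
  set W : Set (Euc n) → Set {v : Euc n // IsVertexOf P v} := fun F => {u | IsVertexOf F u}
  have hWcard : ∀ F, IsFacetOf P F → (W F).ncard = d := fun F hF => by
    rw [← Set.ncard_image_of_injective _ Subtype.val_injective, hF.1.image_val_vertices hP.1,
      hP.2.2 F hF]
  have hWconv : ∀ F, IsFacetOf P F → convexHull ℝ (Subtype.val '' W F) = F := fun F hF => by
    rw [hF.1.image_val_vertices hP.1]
    exact (hF.1.isPolytope hP.1).convexHull_vertices
  have hCN : ∀ F, IsFacetOf P F → segment ℝ (w : Euc n) v ⊆ F →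
      W F \ {w, v} ⊆ (polytopeGraph P).commonNeighbors w v := by
    rintro F hF hwvF x ⟨hx, hxwv⟩
    simp only [Set.mem_insert_iff, Set.mem_singleton_iff, not_or] at hxwv
    exact ⟨hF.adj_of_isVertexOf hP (w.2.of_mem_face hF.1 (hwvF (left_mem_segment ℝ _ _))) hx
        (Ne.symm hxwv.1),
      hF.adj_of_isVertexOf hP (v.2.of_mem_face hF.1 (hwvF (right_mem_segment ℝ _ _))) hx
        (Ne.symm hxwv.2)⟩
  have hunion : d + 1 ≤ (W F₁ ∪ W F₂).ncard := by
    have hne : ¬ W F₁ ⊆ W F₂ := fun h => hF₁₂ <| by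
      rw [← hWconv F₁ hF₁, ← hWconv F₂ hF₂,
        Set.eq_of_subset_of_ncard_le h (by rw [hWcard F₁ hF₁, hWcard F₂ hF₂])]
    have := Set.ncard_lt_ncard ((Set.subset_union_right (s := W F₁) (t := W F₂)).ssubset_of_ne
      fun h => hne (Set.union_eq_right.mp h.symm))
    rw [hWcard F₂ hF₂] at this
    omega
  have hpair : {w, v} ⊆ W F₁ ∪ W F₂ := Set.insert_subset_iff.mpr
    ⟨Or.inl (w.2.of_mem_face hF₁.1 (hwvF₁ (left_mem_segment ℝ _ _))), Set.singleton_subset_iff.mpr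
      (Or.inl (v.2.of_mem_face hF₁.1 (hwvF₁ (right_mem_segment ℝ _ _))))⟩
  have := Set.ncard_le_ncard (Set.union_sdiff_distrib.symm ▸ Set.union_subset (hCN F₁ hF₁ hwvF₁)
    (hCN F₂ hF₂ hwvF₂) : (W F₁ ∪ W F₂) \ {w, v} ⊆ _)
  rw [Set.ncard_sdiff hpair, Set.ncard_pair hwv.ne] at this
  omega

end PolytopeGraph

namespace SimpleGraph

variable {V : Type*} (G : SimpleGraph V) [Finite V] {X : Set V} {w v : V}

theorem ncard_neighborSet_inter_le_ncard_cutEdges (hv : v ∉ X) :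
    (G.neighborSet v ∩ X).ncard ≤ {e ∈ cutEdges G X | v ∈ e}.ncard := by
  refine Set.ncard_le_ncard_of_injOn (fun u => s(u, v)) ?_ ?_
  · exact fun u ⟨hu, huX⟩ => ⟨⟨u, v, G.adj_symm hu, huX, hv, rfl⟩, Sym2.mem_mk_right _ _⟩
  · intro u₁ hu₁ u₂ _ h
    obtain h | ⟨rfl, -⟩ : u₁ = u₂ ∨ u₁ = v ∧ v = u₂ := by simpa using h
    exacts [h, absurd hu₁.1 (G.irrefl)]

theorem ncard_commonNeighbors_add_two_le (hw : w ∈ X) (hv : v ∉ X) (hwv : G.Adj w v) :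
    (G.commonNeighbors w v).ncard + 2 ≤
      {e ∈ cutEdges G X | v ∈ e}.ncard + (G.neighborSet w ∩ Xᶜ).ncard := by
  set C := G.commonNeighbors w v
  have hsplit := Set.ncard_inter_add_ncard_sdiff_eq_ncard C X
  have hin : insert w (C ∩ X) ⊆ G.neighborSet v ∩ X := Set.insert_subset_iff.mpr
    ⟨⟨G.adj_symm hwv, hw⟩, fun u hu => ⟨hu.1.2, hu.2⟩⟩
  have hout : insert v (C \ X) ⊆ G.neighborSet w ∩ Xᶜ := Set.insert_subset_iff.mpr
    ⟨⟨hwv, hv⟩, fun u hu => ⟨hu.1.1, hu.2⟩⟩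
  have hwC : w ∉ C ∩ X := fun h => G.irrefl h.1.1
  have hvC : v ∉ C \ X := fun h => G.irrefl h.1.2
  have h₁ := Set.ncard_le_ncard hin
  have h₂ := Set.ncard_le_ncard hout
  rw [Set.ncard_insert_of_notMem hwC] at h₁
  rw [Set.ncard_insert_of_notMem hvC] at h₂
  have := G.ncard_neighborSet_inter_le_ncard_cutEdges hv
  omega

end SimpleGraph

theorem cutEdges_compl {V : Type*} (G : SimpleGraph V) (X : Set V) :
    cutEdges G Xᶜ = cutEdges G X := by
  ext e
  constructor <;> rintro ⟨x, y, hxy, hx, hy, rfl⟩ <;>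
    exact ⟨y, x, hxy.symm, by simpa using hy, by simpa using hx, Sym2.eq_swap⟩

theorem IsSimplicialPolytope.add_one_le_ncard_cutEdges {n d : ℕ} (hd : 3 ≤ d) {P : Set (Euc n)}
    (hP : IsSimplicialPolytope P d) {X : Set {v : Euc n // IsVertexOf P v}}
    {w v : {v : Euc n // IsVertexOf P v}} (hw : w ∈ X)
    (hv : v ∈ (polytopeGraph P).neighborSet w ∩ Xᶜ) :
    d + 1 ≤ {e ∈ cutEdges (polytopeGraph P) X | v ∈ e}.ncard +
      ((polytopeGraph P).neighborSet w ∩ Xᶜ).ncard := by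
  have : Finite {v : Euc n // IsVertexOf P v} := hP.1.finite_vertices.to_subtype
  have := hP.le_ncard_commonNeighbors hd hv.1
  have := (polytopeGraph P).ncard_commonNeighbors_add_two_le hw hv.2 hv.1
  omega

theorem cross_neighbours_incident_many_cut_edges_general {n d : ℕ} (hd : 4 ≤ d)
    (P : Set (Euc n)) (hP : IsSimplicialPolytope P d)
    (X : Set {v : Euc n // IsVertexOf P v})
    (D : Set (Sym2 {v : Euc n // IsVertexOf P v}))
    (hDX : D = cutEdges (polytopeGraph P) X) :
    (∀ w ∈ X ∩ cutVerts D,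
      1 ≤ ((polytopeGraph P).neighborSet w ∩ Xᶜ).ncard →
      ((polytopeGraph P).neighborSet w ∩ Xᶜ).ncard ≤ d - 2 →
      ∀ v ∈ (polytopeGraph P).neighborSet w ∩ Xᶜ,
        d + 1 - ((polytopeGraph P).neighborSet w ∩ Xᶜ).ncard ≤ {e ∈ D | v ∈ e}.ncard) ∧
    (∀ z ∈ Xᶜ ∩ cutVerts D,
      1 ≤ ((polytopeGraph P).neighborSet z ∩ X).ncard →
      ((polytopeGraph P).neighborSet z ∩ X).ncard ≤ d - 2 →
      ∀ u ∈ (polytopeGraph P).neighborSet z ∩ X,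
        d + 1 - ((polytopeGraph P).neighborSet z ∩ X).ncard ≤ {e ∈ D | u ∈ e}.ncard) := by
  refine ⟨fun w hw _ _ v hv => ?_, fun z hz _ _ u hu => ?_⟩
  · have := hP.add_one_le_ncard_cutEdges (by omega) hw.1 hv
    rw [← hDX] at this
    omega
  · have := hP.add_one_le_ncard_cutEdges (X := Xᶜ) (by omega) hz.1 (by rwa [compl_compl])
    rw [cutEdges_compl, ← hDX, compl_compl] at this
    omega

/-- Let `d ≥ 4`, let `P` be a simplicial `d`-polytope with graph `G`, and
let `D = E(X, X̄)` be a nontrivial minimum edge cut of `G`. For every vertex `w ∈ X`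
incident with an edge of `D` such that `1 ≤ |N_X̄(w)| ≤ d - 2`, every vertex of `N_X̄(w)`
is incident with at least `d + 1 - |N_X̄(w)|` edges of `D`; and symmetrically for vertices
`z ∈ V(G) ∖ X`. -/
theorem cross_neighbours_incident_many_cut_edges {n d : ℕ} (hd : 4 ≤ d)
    (P : Set (Euc n)) (hP : IsSimplicialPolytope P d)
    (X : Set {v : Euc n // IsVertexOf P v})
    (D : Set (Sym2 {v : Euc n // IsVertexOf P v}))
    (hDX : D = cutEdges (polytopeGraph P) X)
    (hmin : IsMinEdgeCut (polytopeGraph P) D)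
    (hnt : ¬ IsTrivialEdgeCut (polytopeGraph P) D) :
    (∀ w ∈ X ∩ cutVerts D,
      1 ≤ ((polytopeGraph P).neighborSet w ∩ Xᶜ).ncard →
      ((polytopeGraph P).neighborSet w ∩ Xᶜ).ncard ≤ d - 2 →
      ∀ v ∈ (polytopeGraph P).neighborSet w ∩ Xᶜ,
        d + 1 - ((polytopeGraph P).neighborSet w ∩ Xᶜ).ncard ≤ {e ∈ D | v ∈ e}.ncard) ∧
    (∀ z ∈ Xᶜ ∩ cutVerts D,
      1 ≤ ((polytopeGraph P).neighborSet z ∩ X).ncard →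
      ((polytopeGraph P).neighborSet z ∩ X).ncard ≤ d - 2 →
      ∀ u ∈ (polytopeGraph P).neighborSet z ∩ X,
        d + 1 - ((polytopeGraph P).neighborSet z ∩ X).ncard ≤ {e ∈ D | u ∈ e}.ncard) :=
  cross_neighbours_incident_many_cut_edges_general hd P hP X D hDX

end
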